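/- Let R be a domain with quotient field Q, and let F = ⊕_{η∈S} R·e_η with |S| ≥ 2 and distinguished element ⊥ ∈ S. Let p₀, p₁ be comaximal primes of R. Suppose M is an R-module with F ⊆ M ⊆ Q ⊗ F, such that M contains p₀^{-∞}F₀ and p₁^{-∞}F₁ where F₁ = R·e_⊥ and F₀ = span{e_η − e_η' : η,η' ∈ S}. If φ is an R-endomorphism of M that is multiplication by some q ∈ Q and satisfies (p_i^{-∞}F_i)φ ⊆ p_i^{-∞}F_i for i = 0,1, then q ∈ R. -/

import Mathlib

/-! Testing `φ` on `e_⊥ ∈ F₁` and on `e_η - e_⊥ ∈ F₀` shows that `p₁ⁿ q` and `p₀ᵐ q` are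
coordinates of vectors in `F₁` and `F₀`, which have coordinates in `R`. As `p₀ᵐ` and `p₁ⁿ`
are coprime, `q` is an `R`-combination of `p₀ᵐ q` and `p₁ⁿ q`. -/

theorem IsCoprime.mem_range_algebraMap {R A : Type*} [CommSemiring R] [Semiring A]
    [Algebra R A] {a b : R} (hab : IsCoprime a b) {x : A}
    (ha : algebraMap R A a * x ∈ Set.range (algebraMap R A))
    (hb : algebraMap R A b * x ∈ Set.range (algebraMap R A)) :
    x ∈ Set.range (algebraMap R A) := by
  obtain ⟨u, v, huv⟩ := hab
  obtain ⟨c, hc⟩ := ha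
  obtain ⟨d, hd⟩ := hb
  refine ⟨u * c + v * d, ?_⟩
  calc algebraMap R A (u * c + v * d) = algebraMap R A (u * a + v * b) * x := by
        simp only [map_add, map_mul, hc, hd, add_mul, mul_assoc]
    _ = x := by rw [huv, map_one, one_mul]

namespace Finsupp

variable {R A S : Type*} [CommSemiring R] [Semiring A] [Algebra R A]

theorem single_one_mem_range_mapRange_algebraMap (i : S) :
    single i (1 : A) ∈ LinearMap.range
      (mapRange.linearMap (Algebra.linearMap R A) : (S →₀ R) →ₗ[R] S →₀ A) :=
  ⟨single i 1, by simp⟩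

theorem apply_mem_range_algebraMap {v : S →₀ A}
    (hv : v ∈ LinearMap.range
      (mapRange.linearMap (Algebra.linearMap R A) : (S →₀ R) →ₗ[R] S →₀ A)) (i : S) :
    v i ∈ Set.range (algebraMap R A) := by
  obtain ⟨f, rfl⟩ := hv
  exact ⟨f i, by simp⟩

end Finsupp

theorem stmt8_general (R Q : Type*) [CommRing R] [Field Q] [Algebra R Q]
    (S : Type*) (bot : S) (hS : ∃ η : S, η ≠ bot)
    (p₀ p₁ : R) (hco : IsCoprime p₀ p₁)
    (F₀ F₁ M : Submodule R (S →₀ Q))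
    (hF₀ : F₀ = Submodule.span R {x : S →₀ Q |
      ∃ η η' : S, x = Finsupp.single η (1 : Q) - Finsupp.single η' 1})
    (hF₁ : F₁ = Submodule.span R {Finsupp.single bot (1 : Q)})
    (hFM : ∀ η : S, Finsupp.single η (1 : Q) ∈ M)
    (φ : M →ₗ[R] M) (q : Q)
    (hφ : ∀ m : M, ((φ m : M) : S →₀ Q) = q • (m : S →₀ Q))
    (hinv0 : ∀ m : M, (m : S →₀ Q) ∈
        {v : S →₀ Q | ∃ n : ℕ, algebraMap R Q (p₀ ^ n) • v ∈ F₀} →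
      ((φ m : M) : S →₀ Q) ∈ {v : S →₀ Q | ∃ n : ℕ, algebraMap R Q (p₀ ^ n) • v ∈ F₀})
    (hinv1 : ∀ m : M, (m : S →₀ Q) ∈
        {v : S →₀ Q | ∃ n : ℕ, algebraMap R Q (p₁ ^ n) • v ∈ F₁} →
      ((φ m : M) : S →₀ Q) ∈ {v : S →₀ Q | ∃ n : ℕ, algebraMap R Q (p₁ ^ n) • v ∈ F₁}) :
    q ∈ Set.range (algebraMap R Q) := by
  obtain ⟨η, hη⟩ := hS
  -- `L` is the lattice `R^(S) ⊆ Q^(S)`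
  set L := LinearMap.range
    (Finsupp.mapRange.linearMap (Algebra.linearMap R Q) : (S →₀ R) →ₗ[R] S →₀ Q)
  have hF₀L : F₀ ≤ L := hF₀ ▸ Submodule.span_le.mpr (by
    rintro _ ⟨a, b, rfl⟩
    exact sub_mem (Finsupp.single_one_mem_range_mapRange_algebraMap a)
      (Finsupp.single_one_mem_range_mapRange_algebraMap b))
  have hF₁L : F₁ ≤ L := hF₁ ▸ Submodule.span_le.mpr
    (Set.singleton_subset_iff.mpr (Finsupp.single_one_mem_range_mapRange_algebraMap bot))
  obtain ⟨m, hm⟩ := hinv0 ⟨_, sub_mem (hFM η) (hFM bot)⟩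
    ⟨0, by rw [pow_zero, map_one, one_smul, hF₀]; exact Submodule.subset_span ⟨η, bot, rfl⟩⟩
  obtain ⟨n, hn⟩ := hinv1 ⟨_, hFM bot⟩ ⟨0, by simp [hF₁]⟩
  rw [hφ] at hm hn
  refine (hco.pow (m := m) (n := n)).mem_range_algebraMap ?_ ?_
  · simpa [hη] using Finsupp.apply_mem_range_algebraMap (hF₀L hm) η
  · simpa using Finsupp.apply_mem_range_algebraMap (hF₁L hn) bot

/-- If `M` with `F ⊆ M ⊆ Q ⊗ F` contains `p₀^{-∞}F₀` and `p₁^{-∞}F₁`, and the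
endomorphism `φ` of `M` is multiplication by `q ∈ Q` and preserves both
`p₀^{-∞}F₀` and `p₁^{-∞}F₁`, then `q ∈ R`. -/
theorem stmt8 (R Q : Type*) [CommRing R] [IsDomain R] [Field Q] [Algebra R Q]
    [IsFractionRing R Q] (S : Type*) (bot : S) (hS : ∃ η : S, η ≠ bot)
    (p₀ p₁ : R) (h₀ : Prime p₀) (h₁ : Prime p₁) (hco : IsCoprime p₀ p₁)
    (F₀ F₁ M : Submodule R (S →₀ Q))
    (hF₀ : F₀ = Submodule.span R {x : S →₀ Q |
      ∃ η η' : S, x = Finsupp.single η (1 : Q) - Finsupp.single η' 1})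
    (hF₁ : F₁ = Submodule.span R {Finsupp.single bot (1 : Q)})
    (hFM : ∀ η : S, Finsupp.single η (1 : Q) ∈ M)
    (hM0 : {v : S →₀ Q | ∃ n : ℕ, algebraMap R Q (p₀ ^ n) • v ∈ F₀} ⊆ (M : Set (S →₀ Q)))
    (hM1 : {v : S →₀ Q | ∃ n : ℕ, algebraMap R Q (p₁ ^ n) • v ∈ F₁} ⊆ (M : Set (S →₀ Q)))
    (φ : M →ₗ[R] M) (q : Q)
    (hφ : ∀ m : M, ((φ m : M) : S →₀ Q) = q • (m : S →₀ Q))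
    (hinv0 : ∀ m : M, (m : S →₀ Q) ∈
        {v : S →₀ Q | ∃ n : ℕ, algebraMap R Q (p₀ ^ n) • v ∈ F₀} →
      ((φ m : M) : S →₀ Q) ∈ {v : S →₀ Q | ∃ n : ℕ, algebraMap R Q (p₀ ^ n) • v ∈ F₀})
    (hinv1 : ∀ m : M, (m : S →₀ Q) ∈
        {v : S →₀ Q | ∃ n : ℕ, algebraMap R Q (p₁ ^ n) • v ∈ F₁} →
      ((φ m : M) : S →₀ Q) ∈ {v : S →₀ Q | ∃ n : ℕ, algebraMap R Q (p₁ ^ n) • v ∈ F₁}) :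
    q ∈ Set.range (algebraMap R Q) :=
  stmt8_general R Q S bot hS p₀ p₁ hco F₀ F₁ M hF₀ hF₁ hFM φ q hφ hinv0 hinv1
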